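/- arXiv:2601.14057 — 2 statements merged into one kernel-verified Lean document; each statement's English description precedes it below -/
import Mathlib

section
/- Let 1 ≤ k < n be integers and let x_1,…,x_n be positive integers with σ_k(x_1,…,x_n) = σ_n(x_1,…,x_n). Then (x_1·x_2·…·x_n)^(n−k) ≥ C(n,k)^n, where C(n,k) is the binomial coefficient; equivalently, σ_n(x_1,…,x_n) ≥ C(n,k)^(n/(n−k)). -/
/-!
Each of the `m = C(n,k)` terms of `σ_k` is a product of `k` of the `x_i`, and every `x_i` occurs
in `C(n-1,k-1)` of them, so AM-GM on these terms gives `m^m P^C(n-1,k-1) ≤ σ_k^m`, where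
`P = x_1 ⋯ x_n`. Under `σ_k = σ_n = P`, Pascal's rule cancels this to `m^m ≤ P^C(n-1,k)`, and
`n C(n-1,k) = m (n-k)` turns its `n`-th power into `(m^n)^m ≤ (P^(n-k))^m`.
-/

open Finset

def esymm (n k : ℕ) (x : Fin n → ℕ) : ℕ :=
  ∑ s ∈ Finset.univ.powersetCard k, ∏ i ∈ s, x i

theorem Real.card_pow_mul_prod_le_sum_pow {ι : Type*} (s : Finset ι) {f : ι → ℝ}
    (hf : ∀ i ∈ s, 0 ≤ f i) : (#s : ℝ) ^ #s * ∏ i ∈ s, f i ≤ (∑ i ∈ s, f i) ^ #s := by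
  rcases s.eq_empty_or_nonempty with rfl | hs
  · simp
  have hcard : (#s : ℝ) ≠ 0 := by exact_mod_cast hs.card_pos.ne'
  have amgm := Real.geom_mean_le_arith_mean_weighted s (fun _ => (#s : ℝ)⁻¹) f
    (fun _ _ => by positivity) (by simp [hcard]) hf
  have hprod : (∏ i ∈ s, f i ^ (#s : ℝ)⁻¹) ^ #s = ∏ i ∈ s, f i := by
    rw [← prod_pow]
    refine prod_congr rfl fun i hi => ?_
    rw [← Real.rpow_natCast, ← Real.rpow_mul (hf i hi), inv_mul_cancel₀ hcard, Real.rpow_one]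
  calc (#s : ℝ) ^ #s * ∏ i ∈ s, f i
      = (#s * ∏ i ∈ s, f i ^ (#s : ℝ)⁻¹) ^ #s := by rw [mul_pow, hprod]
    _ ≤ (#s * ∑ i ∈ s, (#s : ℝ)⁻¹ * f i) ^ #s := by
      have hgeom : 0 ≤ ∏ i ∈ s, f i ^ (#s : ℝ)⁻¹ :=
        prod_nonneg fun i hi => Real.rpow_nonneg (hf i hi) _
      gcongr
    _ = (∑ i ∈ s, f i) ^ #s := by rw [← mul_sum, mul_inv_cancel_left₀ hcard]

theorem Nat.card_pow_mul_prod_le_sum_pow {ι : Type*} (s : Finset ι) (f : ι → ℕ) :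
    #s ^ #s * ∏ i ∈ s, f i ≤ (∑ i ∈ s, f i) ^ #s := by
  exact_mod_cast Real.card_pow_mul_prod_le_sum_pow s (f := fun i => (f i : ℝ))
    fun _ _ => Nat.cast_nonneg _

theorem Finset.prod_powersetCard_prod {ι M : Type*} [CommMonoid M] [DecidableEq ι]
    (s : Finset ι) {k : ℕ} (hk : 1 ≤ k) (f : ι → M) :
    ∏ t ∈ s.powersetCard k, ∏ i ∈ t, f i = (∏ i ∈ s, f i) ^ (#s - 1).choose (k - 1) := by
  rw [prod_comm' (t' := s) (s' := fun i => {t ∈ s.powersetCard k | {i} ⊆ t}), ← prod_pow]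
  · refine prod_congr rfl fun i hi => ?_
    rw [prod_const, card_filter_powersetCard_subset {i} s k (by simpa) (by simpa)]
    simp
  · intro t i
    simp only [mem_filter, mem_powersetCard, singleton_subset_iff]
    exact ⟨fun ⟨⟨hts, htk⟩, hit⟩ => ⟨⟨⟨hts, htk⟩, hit⟩, hts hit⟩, fun ⟨h, _⟩ => ⟨h.1, h.2⟩⟩

theorem esymm_self (n : ℕ) (x : Fin n → ℕ) : esymm n n x = ∏ i, x i := by
  simpa [esymm] using congrArg (∑ t ∈ ·, ∏ i ∈ t, x i) (powersetCard_self (univ : Finset (Fin n)))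

theorem choose_pow_mul_prod_pow_le_esymm_pow {n k : ℕ} (hk : 1 ≤ k) (x : Fin n → ℕ) :
    n.choose k ^ n.choose k * (∏ i, x i) ^ (n - 1).choose (k - 1) ≤ esymm n k x ^ n.choose k := by
  have amgm := Nat.card_pow_mul_prod_le_sum_pow (univ.powersetCard k) fun t => ∏ i ∈ t, x i
  simpa [esymm, prod_powersetCard_prod _ hk] using amgm

/-- If `1 ≤ k < n` and positive integers `x_1,…,x_n` satisfy `σ_k = σ_n`,
then `(x_1 ⋯ x_n)^(n-k) ≥ C(n,k)^n`. -/
theorem stmt3 (n k : ℕ) (hk : 1 ≤ k) (hkn : k < n) (x : Fin n → ℕ)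
    (hpos : ∀ i, 0 < x i) (h : esymm n k x = esymm n n x) :
    (n.choose k) ^ n ≤ (∏ i, x i) ^ (n - k) := by
  set P := ∏ i, x i
  set m := n.choose k
  have hP : 0 < P := prod_pos fun i _ => hpos i
  have hpascal : m = (n - 1).choose (k - 1) + (n - 1).choose k :=
    Nat.choose_eq_choose_pred_add (by omega) hk
  have hcount : (n - 1).choose k * n = m * (n - k) := by
    simpa [Nat.sub_add_cancel (show 1 ≤ n by omega)] using Nat.choose_mul_succ_eq (n - 1) k
  have hcancel : m ^ m ≤ P ^ (n - 1).choose k := by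
    have amgm : m ^ m * P ^ (n - 1).choose (k - 1) ≤
        P ^ ((n - 1).choose (k - 1) + (n - 1).choose k) :=
      calc m ^ m * P ^ (n - 1).choose (k - 1) ≤ esymm n k x ^ m :=
            choose_pow_mul_prod_pow_le_esymm_pow hk x
        _ = P ^ ((n - 1).choose (k - 1) + (n - 1).choose k) := by rw [h, esymm_self, ← hpascal]
    rw [pow_add, mul_comm (P ^ _)] at amgm
    exact Nat.le_of_mul_le_mul_right amgm (pow_pos hP _)
  refine (Nat.pow_le_pow_iff_left (Nat.choose_pos hkn.le).ne').mp ?_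
  calc (m ^ n) ^ m = (m ^ m) ^ n := by rw [← pow_mul, ← pow_mul, mul_comm]
    _ ≤ (P ^ (n - 1).choose k) ^ n := Nat.pow_le_pow_left hcancel n
    _ = (P ^ (n - k)) ^ m := by rw [← pow_mul, ← pow_mul, hcount, mul_comm]
end

section
/- For every n ≥ 2, the sequence (v_n) satisfies the recursion v_{n+1} = v_n² − v_n + 1 + Π_{1≤i≤n−1} v_i. -/
/-!
The recursion is `v (n+1) = 1 + e₁/(1 - e₂)`, with `e₁`, `e₂` the first two elementary symmetric
functions of `1/v 1, …, 1/v n`. Writing `P n = ∏_{i ≤ n} v i`, one shows by induction that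
`1 - e₂ = 1/P n`: adding `v (n+1)` lowers `1 - e₂` by `e₁/v (n+1)`. Hence
`v (n+1) = 1 + e₁ P n`, and comparing this at `n` and `n-1` gives the claimed recursion.
-/

open Finset

/-- `v` is the sequence defined by `v 1 = 1`, `v 2 = 2`, and for `n ≥ 2`,
`v (n+1) = 1 + (Σ_{1≤i≤n} 1/v_i) / (1 - Σ_{1≤i<j≤n} 1/(v_i v_j))`.
These equations determine `v n` uniquely for all `n ≥ 1`. -/
def vSpec (v : ℕ → ℚ) : Prop :=
  v 1 = 1 ∧ v 2 = 2 ∧ ∀ n, 2 ≤ n →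
    v (n + 1) = 1 + (∑ i ∈ Finset.Icc 1 n, 1 / v i) /
      (1 - ∑ p ∈ (Finset.Icc 1 n ×ˢ Finset.Icc 1 n).filter (fun p => p.1 < p.2),
        1 / (v p.1 * v p.2))

theorem sum_filter_lt_Icc_succ {M : Type*} [AddCommMonoid M] (g : ℕ × ℕ → M) (n : ℕ) :
    ∑ p ∈ (Icc 1 (n + 1) ×ˢ Icc 1 (n + 1)).filter (fun p => p.1 < p.2), g p =
      ∑ p ∈ (Icc 1 n ×ˢ Icc 1 n).filter (fun p => p.1 < p.2), g p +
        ∑ i ∈ Icc 1 n, g (i, n + 1) := by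
  have hsplit : (Icc 1 (n + 1) ×ˢ Icc 1 (n + 1)).filter (fun p => p.1 < p.2) =
      (Icc 1 n ×ˢ Icc 1 n).filter (fun p => p.1 < p.2) ∪ (Icc 1 n).image (·, n + 1) := by
    ext ⟨a, b⟩
    simp only [mem_filter, mem_product, mem_Icc, mem_union, mem_image, Prod.mk.injEq]
    constructor
    · rintro ⟨⟨⟨ha, -⟩, -, hb⟩, hab⟩
      rcases hb.lt_or_eq with hb | rfl
      · exact .inl ⟨⟨⟨ha, by omega⟩, by omega, by omega⟩, hab⟩
      · exact .inr ⟨a, ⟨ha, by omega⟩, rfl, rfl⟩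
    · rintro (⟨⟨⟨ha, -⟩, -, hb⟩, hab⟩ | ⟨i, ⟨hi, hin⟩, rfl, rfl⟩) <;> omega
  rw [hsplit, sum_union, sum_image fun _ _ _ _ h => (Prod.mk.inj h).1]
  refine disjoint_left.2 fun ⟨a, b⟩ hab hab' => ?_
  simp only [mem_filter, mem_product, mem_Icc, mem_image, Prod.mk.injEq] at hab hab'
  omega

/-- The second elementary symmetric function of `1 / v 1, …, 1 / v n`. -/
def pairRecipSum (v : ℕ → ℚ) (n : ℕ) : ℚ :=
  ∑ p ∈ (Icc 1 n ×ˢ Icc 1 n).filter (fun p => p.1 < p.2), 1 / (v p.1 * v p.2)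

theorem pairRecipSum_one (v : ℕ → ℚ) : pairRecipSum v 1 = 0 := by
  rw [pairRecipSum, sum_eq_zero]
  simp

theorem pairRecipSum_succ (v : ℕ → ℚ) (n : ℕ) :
    pairRecipSum v (n + 1) = pairRecipSum v n + (∑ i ∈ Icc 1 n, 1 / v i) / v (n + 1) := by
  simp only [pairRecipSum, sum_filter_lt_Icc_succ, sum_div, div_div]

theorem one_sub_pairRecipSum_succ {v : ℕ → ℚ} {n : ℕ} (hP : ∏ i ∈ Icc 1 n, v i ≠ 0)
    (h : 1 - pairRecipSum v n = (∏ i ∈ Icc 1 n, v i)⁻¹)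
    (hsucc : v (n + 1) = 1 + (∑ i ∈ Icc 1 n, 1 / v i) * ∏ i ∈ Icc 1 n, v i)
    (hne : v (n + 1) ≠ 0) :
    1 - pairRecipSum v (n + 1) = (∏ i ∈ Icc 1 (n + 1), v i)⁻¹ := by
  rw [pairRecipSum_succ, prod_Icc_succ_top (by omega), ← sub_sub, h]
  field_simp
  linear_combination hsucc

theorem succ_succ_eq_of_succ_eq {v : ℕ → ℚ} {m : ℕ}
    (h₁ : v (m + 1) = 1 + (∑ i ∈ Icc 1 m, 1 / v i) * ∏ i ∈ Icc 1 m, v i)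
    (h₂ : v (m + 1 + 1) = 1 + (∑ i ∈ Icc 1 (m + 1), 1 / v i) * ∏ i ∈ Icc 1 (m + 1), v i)
    (hne : v (m + 1) ≠ 0) :
    v (m + 1 + 1) = v (m + 1) ^ 2 - v (m + 1) + 1 + ∏ i ∈ Icc 1 m, v i := by
  have hcancel : 1 / v (m + 1) * ((∏ i ∈ Icc 1 m, v i) * v (m + 1)) = ∏ i ∈ Icc 1 m, v i := by
    field_simp
  rw [h₂, sum_Icc_succ_top (by omega), prod_Icc_succ_top (by omega)]
  linear_combination hcancel - v (m + 1) * h₁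

namespace vSpec

variable {v : ℕ → ℚ}

theorem succ_eq_of_one_sub_pairRecipSum (hv : vSpec v) {n : ℕ} (hn : 1 ≤ n)
    (h : 1 - pairRecipSum v n = (∏ i ∈ Icc 1 n, v i)⁻¹) :
    v (n + 1) = 1 + (∑ i ∈ Icc 1 n, 1 / v i) * ∏ i ∈ Icc 1 n, v i := by
  obtain ⟨h₁, h₂, hrec⟩ := hv
  rcases hn.eq_or_lt with rfl | hn
  · norm_num [h₁, h₂]
  · rw [hrec n hn, ← div_inv_eq_mul, ← h]
    rfl

theorem pos_and_one_sub_pairRecipSum (hv : vSpec v) {n : ℕ} (hn : 1 ≤ n) :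
    (∀ k ∈ Icc 1 n, 0 < v k) ∧ 1 - pairRecipSum v n = (∏ i ∈ Icc 1 n, v i)⁻¹ := by
  induction n, hn using Nat.le_induction with
  | base => simp [pairRecipSum_one, hv.1]
  | succ n hn ih =>
    obtain ⟨hpos, hinv⟩ := ih
    have hP : 0 < ∏ i ∈ Icc 1 n, v i := prod_pos hpos
    have hsum : 0 ≤ ∑ i ∈ Icc 1 n, 1 / v i := sum_nonneg fun i hi => (one_div_pos.2 (hpos i hi)).le
    have hsucc := hv.succ_eq_of_one_sub_pairRecipSum hn hinv
    have hvpos : 0 < v (n + 1) := hsucc ▸ by positivity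
    refine ⟨fun k hk => ?_, one_sub_pairRecipSum_succ hP.ne' hinv hsucc hvpos.ne'⟩
    rcases (mem_Icc.1 hk).2.lt_or_eq with hk' | rfl
    · exact hpos k (mem_Icc.2 ⟨(mem_Icc.1 hk).1, by omega⟩)
    · exact hvpos

theorem pos (hv : vSpec v) {k : ℕ} (hk : 1 ≤ k) : 0 < v k :=
  (hv.pos_and_one_sub_pairRecipSum hk).1 k (mem_Icc.2 ⟨hk, le_rfl⟩)

theorem succ_eq (hv : vSpec v) {n : ℕ} (hn : 1 ≤ n) :
    v (n + 1) = 1 + (∑ i ∈ Icc 1 n, 1 / v i) * ∏ i ∈ Icc 1 n, v i :=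
  hv.succ_eq_of_one_sub_pairRecipSum hn (hv.pos_and_one_sub_pairRecipSum hn).2

end vSpec

/-- For `n ≥ 2`, `v_{n+1} = v_n² − v_n + 1 + Π_{1≤i≤n−1} v_i`. -/
theorem stmt5 (v : ℕ → ℚ) (hv : vSpec v) (n : ℕ) (hn : 2 ≤ n) :
    v (n + 1) = v n ^ 2 - v n + 1 + ∏ i ∈ Finset.Icc 1 (n - 1), v i := by
  obtain ⟨m, rfl⟩ : ∃ m, n = m + 1 := ⟨n - 1, by omega⟩
  have hm : 1 ≤ m := by omega
  rw [Nat.add_sub_cancel]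
  exact succ_succ_eq_of_succ_eq (hv.succ_eq hm) (hv.succ_eq (by omega)) (hv.pos (by omega)).ne'
end
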